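/- Let G be a finite group of central type with nondegenerate 2-cocycle c, M_n(C) ≅ C^cG with its fine G-grading, J the set of elementary identities and μ the set of their coefficients. If L is a subfield of C with Q(μ) ⊆ L ⊆ C, then J spans the ideal T(L) of graded identities in Σ(L) over L. Conversely, if L ⊆ C is a field of definition for T(C), i.e. T(C) = T(L) ⊗_L C, then L contains Q(μ). Thus Q(μ) is the unique minimal field of definition for the graded identities. -/

import Mathlib

open scoped BigOperators

noncomputable section

namespace Paper

/-- The 2-cocycle condition for `c : G → G → ℂˣ` (trivial action of `G` on `ℂˣ`). -/
def IsCocycle {G : Type*} [Group G] {M : Type*} [CommGroup M] (c : G → G → M) : Prop :=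
  ∀ g h k : G, c g h * c (g * h) k = c h k * c g (h * k)

/-- Two (unit-valued) 2-cochains are cohomologous (over the common coefficient group). -/
def Cohomologous {G : Type*} [Group G] {M : Type*} [CommGroup M] (c c' : G → G → M) : Prop :=
  ∃ lam : G → M, ∀ g h : G, c' g h = lam g * lam h * (lam (g * h))⁻¹ * c g h

/-- `u : G → A` is a twisted basis of the `k`-algebra `A` for the 2-cocycle `c`;
this expresses that `A` is (isomorphic to) the twisted group algebra `k^c G`,
with its canonical fine `G`-grading `A_g = k·(u g)`. -/
def IsTwistedBasis (k : Type*) {A G : Type*} [CommRing k] [Ring A] [Algebra k A] [Group G]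
    (c : G → G → kˣ) (u : G → A) : Prop :=
  LinearIndependent k u ∧ Submodule.span k (Set.range u) = ⊤ ∧
    ∀ g h : G, u g * u h = ((c g h : k)) • u (g * h)

/-- A 2-cocycle `c` on `G` with values in `ℂˣ` is nondegenerate iff the twisted group
algebra `ℂ^c G` is central simple over `ℂ`, i.e. iff it is a full matrix algebra. -/
def IsNondeg {G : Type*} [Group G] (c : G → G → ℂˣ) : Prop :=
  IsCocycle c ∧ ∃ (n : ℕ) (u : G → Matrix (Fin n) (Fin n) ℂ), IsTwistedBasis ℂ c u

/-- The extended cocycle value `c(g₁, …, g_k)`, defined by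
`u_{g₁} ⋯ u_{g_k} = c(g₁,…,g_k) u_{g₁⋯g_k}` in `ℂ^c G`. -/
def cExt {G : Type*} [Group G] (c : G → G → ℂˣ) : List G → ℂˣ
  | [] => 1
  | g :: l => c g l.prod * cExt c l

/-- Two monomials (words in the variables `x_{ig}`, recorded as lists of pairs `(i,g)`)
are congruent: one is a permutation of the other and they have the same degree. -/
def Congruent {G : Type*} [Group G] (Z₁ Z₂ : List (ℕ × G)) : Prop :=
  Z₁.Perm Z₂ ∧ (Z₁.map Prod.snd).prod = (Z₂.map Prod.snd).prod

/-- The coefficient `c(B) = c(g₁,…,g_k)/c(g_{π(1)},…,g_{π(k)})` of the elementary identity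
attached to the pair of congruent monomials `Z₁`, `Z₂`. -/
def elemCoeff {G : Type*} [Group G] (c : G → G → ℂˣ) (Z₁ Z₂ : List (ℕ × G)) : ℂˣ :=
  cExt c (Z₁.map Prod.snd) * (cExt c (Z₂.map Prod.snd))⁻¹

/-- The set `μ` of coefficients of elementary identities. -/
def muSet {G : Type*} [Group G] (c : G → G → ℂˣ) : Set ℂˣ :=
  {x | ∃ Z₁ Z₂ : List (ℕ × G), Congruent Z₁ Z₂ ∧ x = elemCoeff c Z₁ Z₂}

/-- The field of definition `ℚ(μ)`, as a subfield of `ℂ`. -/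
def Qmu {G : Type*} [Group G] (c : G → G → ℂˣ) : Subfield ℂ :=
  Subfield.closure ((fun x : ℂˣ => (x : ℂ)) '' muSet c)

/-- The free (associative, unital) `G`-graded `k`-algebra `Σ(k) = k⟨x_{ig}⟩` on the
variables `x_{ig}`, `i ∈ ℕ`, `g ∈ G`; the degree of the monomial `x_{i₁g₁}⋯x_{i_kg_k}`
is `g₁⋯g_k`. -/
abbrev FreeAlg (k : Type*) [CommSemiring k] (G : Type*) : Type _ :=
  MonoidAlgebra k (FreeMonoid (ℕ × G))

/-- The variable `x_{ig}` as an element of the free algebra. -/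
def xVar {k : Type*} [CommSemiring k] {G : Type*} (i : ℕ) (g : G) : FreeAlg k G :=
  MonoidAlgebra.single (FreeMonoid.ofList [(i, g)]) 1

/-- Evaluation of the monomial `Z = x_{i₁g₁}⋯x_{i_kg_k}` under the graded substitution
`x_{ig} ↦ (lam (i,g)) • u g` (every degree-`g` element of `ℂ^c G` is a scalar multiple
of `u g`). -/
def evalMon {G A : Type*} [Group G] [Ring A] [Algebra ℂ A] (u : G → A)
    (lam : ℕ × G → ℂ) (Z : List (ℕ × G)) : A :=
  (Z.map fun x => lam x • u x.2).prod

/-- `p ∈ Σ(ℂ)` is a graded identity of the `G`-graded algebra with twisted basis `u`. -/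
def IsGradedIdentity {G A : Type*} [Group G] [Ring A] [Algebra ℂ A] (u : G → A)
    (p : FreeAlg ℂ G) : Prop :=
  ∀ lam : ℕ × G → ℂ, (p.coeff.sum fun Z coef => coef • evalMon u lam (FreeMonoid.toList Z)) = 0

/-- Graded identities with coefficients in a subfield `L ⊆ ℂ`. -/
def IsGradedIdentityS {G A : Type*} [Group G] [Ring A] [Algebra ℂ A] (L : Subfield ℂ)
    (u : G → A) (p : FreeAlg ↥L G) : Prop :=
  ∀ lam : ℕ × G → ℂ,
    (p.coeff.sum fun Z coef => ((coef : ℂ)) • evalMon u lam (FreeMonoid.toList Z)) = 0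

/-- The elementary identity `B = Z₁ - c(B) Z₂` attached to congruent monomials. -/
def elemIdent {G : Type*} [Group G] (c : G → G → ℂˣ) (Z₁ Z₂ : List (ℕ × G)) :
    FreeAlg ℂ G :=
  MonoidAlgebra.single (FreeMonoid.ofList Z₁) 1 -
    MonoidAlgebra.single (FreeMonoid.ofList Z₂) ((elemCoeff c Z₁ Z₂ : ℂˣ) : ℂ)


/-- The set of graded identities of `ℂ^c G` (realized via the twisted basis `u`) lying in
`Σ(L)`, i.e. having all coefficients in the subfield `L ⊆ ℂ`. -/
def TIdealS {G A : Type*} [Group G] [Ring A] [Algebra ℂ A] (L : Subfield ℂ) (u : G → A) :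
    Set (FreeAlg ℂ G) :=
  {p : FreeAlg ℂ G | (∀ Z : FreeMonoid (ℕ × G), p.coeff Z ∈ L) ∧ IsGradedIdentity u p}

/-- The set `J` of elementary identities. -/
def elemSet {G : Type*} [Group G] (c : G → G → ℂˣ) : Set (FreeAlg ℂ G) :=
  {q : FreeAlg ℂ G | ∃ Z₁ Z₂ : List (ℕ × G), Congruent Z₁ Z₂ ∧ q = elemIdent c Z₁ Z₂}

/-! ### Auxiliary lemmas -/

section Aux

open scoped Classical

variable {G : Type*} [Group G] {A : Type*} [Ring A] [Algebra ℂ A]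

lemma cocycle_one_right {c : G → G → ℂˣ} (hc : IsCocycle c) (g : G) : c g 1 = c 1 1 := by
  have := hc g 1 1
  simp only [mul_one, one_mul] at this
  exact mul_right_cancel this

lemma cocycle_one_left {c : G → G → ℂˣ} (hc : IsCocycle c) (h : G) : c 1 h = c 1 1 := by
  have := hc 1 h h⁻¹
  simp only [one_mul, mul_inv_cancel] at this
  rw [mul_comm (c h h⁻¹)] at this
  exact mul_right_cancel this

lemma u_one {c : G → G → ℂˣ} (hc : IsCocycle c) {u : G → A} (hu : IsTwistedBasis ℂ c u) :
    u 1 = ((c 1 1 : ℂ)) • (1 : A) := by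
  have key : ∀ y : A, u 1 * y = ((c 1 1 : ℂ)) • y := by
    intro y
    have hy : y ∈ Submodule.span ℂ (Set.range u) := hu.2.1 ▸ Submodule.mem_top
    induction hy using Submodule.span_induction with
    | mem x hx =>
      obtain ⟨h, rfl⟩ := hx
      rw [hu.2.2, one_mul, cocycle_one_left hc]
    | zero => simp
    | add x y _ _ hx hy => rw [mul_add, hx, hy, smul_add]
    | smul a x _ hx => rw [mul_smul_comm, hx, smul_comm]
  simpa using key 1

lemma uprod_eq {c : G → G → ℂˣ} (hc : IsCocycle c) {u : G → A} (hu : IsTwistedBasis ℂ c u) :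
    ∀ l : List G, (l.map u).prod =
      (((cExt c l : ℂˣ) : ℂ) * (((c 1 1 : ℂˣ) : ℂ))⁻¹) • u l.prod := by
  intro l
  induction l with
  | nil =>
    simp only [List.map_nil, List.prod_nil, cExt, Units.val_one, one_mul]
    rw [u_one hc hu, smul_smul, inv_mul_cancel₀ (Units.ne_zero _), one_smul]
  | cons a t ih =>
    rw [List.map_cons, List.prod_cons, ih, mul_smul_comm, hu.2.2, smul_smul,
      List.prod_cons]
    show _ = ((((c a t.prod * cExt c t : ℂˣ) : ℂ)) * _) • u (a * t.prod)
    rw [Units.val_mul]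
    ring_nf

omit [Group G] in
lemma smul_factor (u : G → A) (lam : ℕ × G → ℂ) :
    ∀ Z : List (ℕ × G), (Z.map fun x => lam x • u x.2).prod =
      (Z.map lam).prod • ((Z.map Prod.snd).map u).prod := by
  intro Z
  induction Z with
  | nil => simp
  | cons a t ih =>
    simp only [List.map_cons, List.prod_cons, ih]
    rw [smul_mul_assoc, mul_smul_comm, smul_smul]

lemma evalMon_eq {c : G → G → ℂˣ} (hc : IsCocycle c) {u : G → A}
    (hu : IsTwistedBasis ℂ c u) (lam : ℕ × G → ℂ) (Z : List (ℕ × G)) :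
    evalMon u lam Z = ((Z.map lam).prod * ((cExt c (Z.map Prod.snd) : ℂˣ) : ℂ) *
      (((c 1 1 : ℂˣ) : ℂ))⁻¹) • u ((Z.map Prod.snd).prod) := by
  rw [evalMon, smul_factor, uprod_eq hc hu, smul_smul, mul_assoc]

omit [Group G] in
lemma monProd (lam : ℕ × G → ℂ) :
    ∀ l : List (ℕ × G),
      (Multiset.toFinsupp (↑l : Multiset (ℕ × G))).prod (fun x e => lam x ^ e) =
        (l.map lam).prod := by
  intro l
  induction l with
  | nil => simp
  | cons a t ih =>
    have : (↑(a :: t) : Multiset (ℕ × G)) = {a} + ↑t := by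
      rw [Multiset.singleton_add]; rfl
    rw [this, map_add, Multiset.toFinsupp_singleton,
      Finsupp.prod_add_index' (fun x => pow_zero (lam x)) (fun x m n => pow_add (lam x) m n)]
    rw [ih, List.map_cons, List.prod_cons]
    congr 1
    rw [Finsupp.prod_single_index (h := fun x e => lam x ^ e) (pow_zero (lam a)), pow_one]

/-- The degree of a word. -/
def wordDeg {G : Type*} [Group G] (Z : FreeMonoid (ℕ × G)) : G :=
  ((FreeMonoid.toList Z).map Prod.snd).prod

/-- The multiset of letters of a word. -/
def wordMs {G : Type*} [Group G] (Z : FreeMonoid (ℕ × G)) : Multiset (ℕ × G) :=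
  (↑(FreeMonoid.toList Z) : Multiset (ℕ × G))

/-- The extended-cocycle coefficient of a word, as a complex number. -/
def ccV {G : Type*} [Group G] (c : G → G → ℂˣ) (Z : FreeMonoid (ℕ × G)) : ℂ :=
  ((cExt c ((FreeMonoid.toList Z).map Prod.snd) : ℂˣ) : ℂ)

lemma ccV_ne_zero {c : G → G → ℂˣ} (Z : FreeMonoid (ℕ × G)) : ccV c Z ≠ 0 :=
  Units.ne_zero _

lemma classSum_eq_zero [Fintype G] {c : G → G → ℂˣ} (hc : IsCocycle c) {u : G → A}
    (hu : IsTwistedBasis ℂ c u) {p : FreeAlg ℂ G} (hp : IsGradedIdentity u p)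
    (m : Multiset (ℕ × G)) (g : G) :
    ∑ Z ∈ p.coeff.support.filter (fun Z => wordMs Z = m ∧ wordDeg Z = g),
      p.coeff Z * ccV c Z = 0 := by
  set deg : FreeMonoid (ℕ × G) → G := wordDeg with hdeg
  set cc : FreeMonoid (ℕ × G) → ℂ := ccV c with hcc
  set ε : ℂ := (((c 1 1 : ℂˣ) : ℂ))⁻¹ with hε
  have hεne : ε ≠ 0 := by
    rw [hε]; exact inv_ne_zero (Units.ne_zero _)
  have step1 : ∀ lam : ℕ × G → ℂ, ∀ g : G,
      (∑ Z ∈ p.coeff.support.filter (fun Z => deg Z = g),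
        p.coeff Z * ((FreeMonoid.toList Z).map lam).prod * cc Z) = 0 := by
    intro lam
    have h0 := hp lam
    rw [Finsupp.sum] at h0
    have h1 : ∑ Z ∈ p.coeff.support,
        ((p.coeff Z * ((FreeMonoid.toList Z).map lam).prod * cc Z * ε) • u (deg Z)) = 0 := by
      rw [← h0]
      refine Finset.sum_congr rfl (fun Z _ => ?_)
      rw [evalMon_eq hc hu, smul_smul]
      simp only [hcc, hdeg, ccV, wordDeg]
      rw [hε]; ring_nf
    have h2 : ∑ j : G,
        ((∑ Z ∈ p.coeff.support.filter (fun Z => deg Z = j),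
          p.coeff Z * ((FreeMonoid.toList Z).map lam).prod * cc Z) * ε) • u j = 0 := by
      rw [← h1, ← Finset.sum_fiberwise p.coeff.support deg
        (fun Z => (p.coeff Z * ((FreeMonoid.toList Z).map lam).prod * cc Z * ε) • u (deg Z))]
      refine Finset.sum_congr rfl (fun j _ => ?_)
      rw [Finset.sum_mul, Finset.sum_smul]
      refine Finset.sum_congr rfl (fun Z hZ => ?_)
      rw [(Finset.mem_filter.mp hZ).2]
    intro g
    have h3 := Fintype.linearIndependent_iff.mp hu.1
      (fun j => (∑ Z ∈ p.coeff.support.filter (fun Z => deg Z = j),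
        p.coeff Z * ((FreeMonoid.toList Z).map lam).prod * cc Z) * ε) h2 g
    exact (mul_eq_zero.mp h3).resolve_right hεne
  set P : MvPolynomial (ℕ × G) ℂ := ∑ Z ∈ p.coeff.support.filter (fun Z => deg Z = g),
    MvPolynomial.monomial (Multiset.toFinsupp (↑(FreeMonoid.toList Z))) (p.coeff Z * cc Z) with hP
  have heval : ∀ lam : ℕ × G → ℂ, MvPolynomial.eval lam P = 0 := by
    intro lam
    rw [hP, map_sum, ← step1 lam g]
    refine Finset.sum_congr rfl (fun Z _ => ?_)
    rw [MvPolynomial.eval_monomial, monProd]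
    ring
  have hP0 : P = 0 := by
    apply MvPolynomial.funext
    intro x
    rw [heval x, map_zero]
  have hcoeff := congrArg (MvPolynomial.coeff (Multiset.toFinsupp m)) hP0
  rw [hP, MvPolynomial.coeff_sum, MvPolynomial.coeff_zero] at hcoeff
  simp only [MvPolynomial.coeff_monomial] at hcoeff
  rw [← Finset.sum_filter, Finset.filter_filter] at hcoeff
  rw [← hcoeff]
  apply Finset.sum_congr _ (fun Z _ => rfl)
  apply Finset.filter_congr
  intro Z _
  constructor
  · rintro ⟨h1, h2⟩; exact ⟨h2, congrArg Multiset.toFinsupp h1⟩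
  · rintro ⟨h1, h2⟩; exact ⟨Multiset.toFinsupp.injective h2, h1⟩

end Aux

section Aux2
open scoped Classical
variable {G : Type*} [Group G] {A : Type*} [Ring A] [Algebra ℂ A]

lemma ident_sum (u : G → A) (lam : ℕ × G → ℂ) (p : FreeAlg ℂ G) :
    (p.coeff.sum fun Z coef => coef • evalMon u lam (FreeMonoid.toList Z)) =
      Finsupp.linearCombination ℂ (fun Z => evalMon u lam (FreeMonoid.toList Z)) p.coeff := rfl

lemma isGradedIdentity_elemIdent {c : G → G → ℂˣ} (hc : IsCocycle c) {u : G → A}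
    (hu : IsTwistedBasis ℂ c u) {Z₁ Z₂ : List (ℕ × G)} (h : Congruent Z₁ Z₂) :
    IsGradedIdentity u (elemIdent c Z₁ Z₂) := by
  intro lam
  rw [ident_sum, elemIdent, MonoidAlgebra.coeff_sub, map_sub, MonoidAlgebra.coeff_single, MonoidAlgebra.coeff_single,
    Finsupp.linearCombination_single, Finsupp.linearCombination_single,
    FreeMonoid.toList_ofList, FreeMonoid.toList_ofList, one_smul,
    evalMon_eq hc hu, evalMon_eq hc hu, h.2, smul_smul, ← sub_smul]
  convert zero_smul ℂ _
  have hlam : (Z₁.map lam).prod = (Z₂.map lam).prod := (h.1.map lam).prod_eq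
  have hcoe : ((elemCoeff c Z₁ Z₂ : ℂˣ) : ℂ) * ((cExt c (Z₂.map Prod.snd) : ℂˣ) : ℂ) =
      ((cExt c (Z₁.map Prod.snd) : ℂˣ) : ℂ) := by
    rw [elemCoeff, Units.val_mul, mul_assoc, ← Units.val_mul, inv_mul_cancel, Units.val_one,
      mul_one]
  rw [hlam, ← hcoe]
  ring

end Aux2

section Parts
open scoped Classical
variable {G : Type*} [Group G] {A : Type*} [Ring A] [Algebra ℂ A]

lemma elemCoeff_val (c : G → G → ℂˣ) (Z W : FreeMonoid (ℕ × G)) :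
    ((elemCoeff c (FreeMonoid.toList Z) (FreeMonoid.toList W) : ℂˣ) : ℂ) =
      ccV c Z * (ccV c W)⁻¹ := by
  rw [elemCoeff, Units.val_mul, Units.val_inv_eq_inv_val, ccV, ccV]

lemma part1 [Fintype G] {c : G → G → ℂˣ} (hc : IsCocycle c) {u : G → A}
    (hu : IsTwistedBasis ℂ c u) (L : Subfield ℂ) :
    TIdealS L u ⊆ (Submodule.span ↥L (elemSet c) : Submodule ↥L (FreeAlg ℂ G)) := by
  intro p hp
  obtain ⟨hL, hI⟩ := hp
  set key : FreeMonoid (ℕ × G) → Multiset (ℕ × G) × G :=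
    fun Z => (wordMs Z, wordDeg Z) with hkeydef
  set rep : Multiset (ℕ × G) × G → FreeMonoid (ℕ × G) := fun k =>
    if h : ∃ Z, key Z = k then h.choose else 1 with hrepdef
  have hrep : ∀ Z, key (rep (key Z)) = key Z := by
    intro Z
    have hex : ∃ W, key W = key Z := ⟨Z, rfl⟩
    rw [hrepdef]
    simp only [dif_pos hex]
    exact hex.choose_spec
  have hcong : ∀ Z : FreeMonoid (ℕ × G),
      Congruent (FreeMonoid.toList Z) (FreeMonoid.toList (rep (key Z))) := by
    intro Z
    have h1 : wordMs (rep (key Z)) = wordMs Z := congrArg Prod.fst (hrep Z)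
    have h2 : wordDeg (rep (key Z)) = wordDeg Z := congrArg Prod.snd (hrep Z)
    exact ⟨(Multiset.coe_eq_coe.mp h1).symm, h2.symm⟩
  have hsmul : ∀ (l : ↥L) (q : FreeAlg ℂ G), l • q = ((l : ℂ)) • q := fun l q => rfl
  -- the "leftover" sum vanishes
  have hz : ∑ Z ∈ p.coeff.support,
      ((p.coeff Z * ((elemCoeff c (FreeMonoid.toList Z) (FreeMonoid.toList (rep (key Z))) : ℂˣ) : ℂ)) •
        (MonoidAlgebra.single (rep (key Z)) (1 : ℂ) : FreeAlg ℂ G)) = 0 := by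
    rw [← Finset.sum_fiberwise_of_maps_to (g := key) (t := p.coeff.support.image key)
      (fun Z hZ => Finset.mem_image_of_mem key hZ)]
    refine Finset.sum_eq_zero (fun k hk => ?_)
    have hin : ∀ Z ∈ p.coeff.support.filter (fun Z => key Z = k),
        (p.coeff Z * ((elemCoeff c (FreeMonoid.toList Z) (FreeMonoid.toList (rep (key Z))) : ℂˣ) : ℂ)) •
          (MonoidAlgebra.single (rep (key Z)) (1 : ℂ) : FreeAlg ℂ G)
        = (p.coeff Z * ccV c Z) • ((ccV c (rep k))⁻¹ •
            (MonoidAlgebra.single (rep k) (1 : ℂ) : FreeAlg ℂ G)) := by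
      intro Z hZ
      have hZk : key Z = k := (Finset.mem_filter.mp hZ).2
      rw [elemCoeff_val, hZk, smul_smul]
      ring_nf
    rw [Finset.sum_congr rfl hin, ← Finset.sum_smul]
    have hfil : p.coeff.support.filter (fun Z => key Z = k)
        = p.coeff.support.filter (fun Z => wordMs Z = k.1 ∧ wordDeg Z = k.2) := by
      apply Finset.filter_congr
      intro Z _
      rw [hkeydef, Prod.ext_iff]
    rw [hfil, classSum_eq_zero hc hu hI k.1 k.2, zero_smul]
  -- the main rewriting of p
  have h1 : ∑ Z ∈ p.coeff.support, (p.coeff Z : ℂ) • (MonoidAlgebra.single Z (1 : ℂ) : FreeAlg ℂ G) = p := by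
    have he : ∀ Z ∈ p.coeff.support, (p.coeff Z : ℂ) • (MonoidAlgebra.single Z (1 : ℂ) : FreeAlg ℂ G)
        = MonoidAlgebra.single Z (p.coeff Z) := by
      intro Z _
      rw [MonoidAlgebra.smul_single, smul_eq_mul, mul_one]
    rw [Finset.sum_congr rfl he]
    exact MonoidAlgebra.sum_coeff_single p
  have hR : ∑ Z ∈ p.coeff.support, (⟨p.coeff Z, hL Z⟩ : ↥L) •
      elemIdent c (FreeMonoid.toList Z) (FreeMonoid.toList (rep (key Z))) = p := by
    have expand : ∀ Z ∈ p.coeff.support, (⟨p.coeff Z, hL Z⟩ : ↥L) •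
        elemIdent c (FreeMonoid.toList Z) (FreeMonoid.toList (rep (key Z)))
        = (p.coeff Z : ℂ) • (MonoidAlgebra.single Z (1 : ℂ) : FreeAlg ℂ G) -
          (p.coeff Z * ((elemCoeff c (FreeMonoid.toList Z)
            (FreeMonoid.toList (rep (key Z))) : ℂˣ) : ℂ)) •
            (MonoidAlgebra.single (rep (key Z)) (1 : ℂ) : FreeAlg ℂ G) := by
      intro Z _
      rw [hsmul, elemIdent, FreeMonoid.ofList_toList, FreeMonoid.ofList_toList, smul_sub]
      congr 1
      rw [MonoidAlgebra.smul_single, MonoidAlgebra.smul_single,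
        smul_eq_mul, smul_eq_mul, mul_one]
    rw [Finset.sum_congr rfl expand, Finset.sum_sub_distrib, h1, hz, sub_zero]
  rw [← hR]
  exact Submodule.sum_mem _ (fun Z _ => Submodule.smul_mem _ _
    (Submodule.subset_span ⟨_, _, hcong Z, rfl⟩))

end Parts

section Part2
open scoped Classical
variable {G : Type*} [Group G] {A : Type*} [Ring A] [Algebra ℂ A]

lemma part2 [Fintype G] {c : G → G → ℂˣ} (hc : IsCocycle c) {u : G → A}
    (hu : IsTwistedBasis ℂ c u) (L : Subfield ℂ)
    (hsp : {p : FreeAlg ℂ G | IsGradedIdentity u p} ⊆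
      (Submodule.span ℂ (TIdealS L u) : Submodule ℂ (FreeAlg ℂ G))) :
    ∀ x ∈ muSet c, (x : ℂ) ∈ L := by
  rintro x ⟨Z₁, Z₂, hcg, rfl⟩
  by_cases hZ : Z₁ = Z₂
  · subst hZ
    rw [elemCoeff, mul_inv_cancel, Units.val_one]
    exact L.one_mem
  · set a := FreeMonoid.ofList Z₁ with hadef
    set b := FreeMonoid.ofList Z₂ with hbdef
    have hab : a ≠ b := fun h => hZ (FreeMonoid.ofList.injective h)
    set S : Finset (FreeMonoid (ℕ × G)) :=
      (Z₁.permutations.toFinset.filter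
        (fun l => (l.map Prod.snd).prod = (Z₁.map Prod.snd).prod)).image FreeMonoid.ofList
      with hSdef
    have hmemS : ∀ Z, Z ∈ S ↔
        (wordMs Z = (↑Z₁ : Multiset (ℕ × G)) ∧ wordDeg Z = (Z₁.map Prod.snd).prod) := by
      intro Z
      constructor
      · intro hZS
        obtain ⟨l, hl, rfl⟩ := Finset.mem_image.mp hZS
        obtain ⟨hperm, hprod⟩ := Finset.mem_filter.mp hl
        have hperm' : l.Perm Z₁ := List.mem_permutations.mp (List.mem_toFinset.mp hperm)
        constructor
        · rw [wordMs, FreeMonoid.toList_ofList]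
          exact Multiset.coe_eq_coe.mpr hperm'
        · rw [wordDeg, FreeMonoid.toList_ofList]
          exact hprod
      · rintro ⟨h1, h2⟩
        refine Finset.mem_image.mpr ⟨FreeMonoid.toList Z,
          Finset.mem_filter.mpr ⟨?_, h2⟩, FreeMonoid.ofList_toList Z⟩
        exact List.mem_toFinset.mpr (List.mem_permutations.mpr (Multiset.coe_eq_coe.mp h1))
    have ha : a ∈ S := (hmemS a).mpr
      ⟨by rw [wordMs, hadef, FreeMonoid.toList_ofList],
       by rw [wordDeg, hadef, FreeMonoid.toList_ofList]⟩
    have hb : b ∈ S := (hmemS b).mpr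
      ⟨by rw [wordMs, hbdef, FreeMonoid.toList_ofList]
          exact Multiset.coe_eq_coe.mpr hcg.1.symm,
       by rw [wordDeg, hbdef, FreeMonoid.toList_ofList]
          exact hcg.2.symm⟩
    have hTsum : ∀ q ∈ TIdealS L u, ∑ Z ∈ S, q.coeff Z * ccV c Z = 0 := by
      intro q hq
      have hsub : q.coeff.support.filter
          (fun Z => wordMs Z = (↑Z₁ : Multiset (ℕ × G)) ∧
            wordDeg Z = (Z₁.map Prod.snd).prod) ⊆ S := by
        intro Z hZf
        exact (hmemS Z).mpr (Finset.mem_filter.mp hZf).2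
      have hzero : ∀ Z ∈ S, Z ∉ q.coeff.support.filter
          (fun Z => wordMs Z = (↑Z₁ : Multiset (ℕ × G)) ∧
            wordDeg Z = (Z₁.map Prod.snd).prod) → q.coeff Z * ccV c Z = 0 := by
        intro Z hZS hZn
        have hns : Z ∉ q.coeff.support :=
          fun hs => hZn (Finset.mem_filter.mpr ⟨hs, (hmemS Z).mp hZS⟩)
        rw [Finsupp.notMem_support_iff.mp hns, zero_mul]
      rw [← Finset.sum_subset hsub hzero]
      exact classSum_eq_zero hc hu hq.2 _ _
    set bL : Module.Basis (Module.Basis.ofVectorSpaceIndex ↥L ℂ) ↥L ℂ := Module.Basis.ofVectorSpace ↥L ℂ with hbL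
    set r : FreeMonoid (ℕ × G) → (Module.Basis.ofVectorSpaceIndex ↥L ℂ →₀ ↥L) :=
      fun Z => bL.repr (ccV c Z) with hrdef
    have hvanish : ∀ q, q ∈ Submodule.span ℂ (TIdealS L u) →
        ∀ i, ∑ Z ∈ S, q.coeff Z * ((r Z i : ℂ)) = 0 := by
      intro q hq
      induction hq using Submodule.span_induction with
      | mem w hw =>
        intro i
        have hsum0 : ∑ Z ∈ S, (⟨w.coeff Z, hw.1 Z⟩ : ↥L) • ccV c Z = 0 := by
          rw [Finset.sum_congr rfl
            (fun Z _ => (rfl : (⟨w.coeff Z, hw.1 Z⟩ : ↥L) • ccV c Z = w.coeff Z * ccV c Z))]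
          exact hTsum w hw
        have h2 := congrArg (fun y => bL.repr y) hsum0
        simp only [map_sum, map_smul, map_zero] at h2
        have h3 := congrArg (fun f => f i) h2
        simp only [Finsupp.finset_sum_apply, Finsupp.smul_apply, Finsupp.coe_zero,
          Pi.zero_apply, smul_eq_mul] at h3
        have h4 := congrArg (L.subtype) h3
        rw [map_sum, map_zero] at h4
        simpa only [map_mul, Subfield.coe_subtype] using h4
      | zero =>
        intro i
        simp
      | add q1 q2 _ _ hq1 hq2 =>
        intro i
        have hcg2 : ∀ Z ∈ S, (q1 + q2).coeff Z * ((r Z i : ℂ))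
            = q1.coeff Z * ((r Z i : ℂ)) + q2.coeff Z * ((r Z i : ℂ)) := by
          intro Z _
          rw [MonoidAlgebra.coeff_add, Finsupp.add_apply, add_mul]
        rw [Finset.sum_congr rfl hcg2, Finset.sum_add_distrib, hq1 i, hq2 i, add_zero]
      | smul t q1 _ hq1 =>
        intro i
        have hcg2 : ∀ Z ∈ S, (t • q1).coeff Z * ((r Z i : ℂ))
            = t * (q1.coeff Z * ((r Z i : ℂ))) := by
          intro Z _
          rw [MonoidAlgebra.coeff_smul, Finsupp.smul_apply, smul_eq_mul, mul_assoc]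
        rw [Finset.sum_congr rfl hcg2, ← Finset.mul_sum, hq1 i, mul_zero]
    have hBid : IsGradedIdentity u (elemIdent c Z₁ Z₂) := isGradedIdentity_elemIdent hc hu hcg
    have hB := hvanish _ (hsp hBid)
    have hBa : (elemIdent c Z₁ Z₂).coeff a = 1 := by
      rw [elemIdent, MonoidAlgebra.coeff_sub, MonoidAlgebra.coeff_single, MonoidAlgebra.coeff_single, Finsupp.sub_apply,
        Finsupp.single_apply, Finsupp.single_apply, if_pos rfl, if_neg (Ne.symm hab), sub_zero]
    have hBb : (elemIdent c Z₁ Z₂).coeff b = -((elemCoeff c Z₁ Z₂ : ℂˣ) : ℂ) := by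
      rw [elemIdent, MonoidAlgebra.coeff_sub, MonoidAlgebra.coeff_single, MonoidAlgebra.coeff_single, Finsupp.sub_apply,
        Finsupp.single_apply, Finsupp.single_apply, if_neg hab, if_pos rfl, zero_sub]
    have hBother : ∀ Z, Z ≠ a → Z ≠ b → (elemIdent c Z₁ Z₂).coeff Z = 0 := by
      intro Z h1 h2
      rw [elemIdent, MonoidAlgebra.coeff_sub, MonoidAlgebra.coeff_single, MonoidAlgebra.coeff_single, Finsupp.sub_apply,
        Finsupp.single_apply, Finsupp.single_apply, if_neg (Ne.symm h1), if_neg (Ne.symm h2),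
        sub_zero]
    have hpair : ∀ i, ((r a i : ℂ)) - ((elemCoeff c Z₁ Z₂ : ℂˣ) : ℂ) * ((r b i : ℂ)) = 0 := by
      intro i
      have h0 := hB i
      have hsub2 : ({a, b} : Finset (FreeMonoid (ℕ × G))) ⊆ S := by
        intro Z hZ
        rcases Finset.mem_insert.mp hZ with h | h
        · exact h ▸ ha
        · exact (Finset.mem_singleton.mp h) ▸ hb
      have hzero2 : ∀ Z ∈ S, Z ∉ ({a, b} : Finset (FreeMonoid (ℕ × G))) →
          (elemIdent c Z₁ Z₂).coeff Z * ((r Z i : ℂ)) = 0 := by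
        intro Z _ hZn
        have h1 : Z ≠ a := fun h => hZn (h ▸ Finset.mem_insert_self a {b})
        have h2 : Z ≠ b := fun h => hZn (by
          rw [h]
          exact Finset.mem_insert_of_mem (Finset.mem_singleton_self b))
        rw [hBother Z h1 h2, zero_mul]
      rw [← Finset.sum_subset hsub2 hzero2, Finset.sum_pair hab, hBa, hBb, one_mul] at h0
      linear_combination h0
    have hbne : ∃ i, r b i ≠ 0 := by
      by_contra hall
      push_neg at hall
      have hr0 : r b = 0 := DFunLike.ext _ _ hall
      have : ccV c b = 0 := by
        apply bL.repr.injective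
        rw [map_zero]
        exact hr0
      exact ccV_ne_zero b this
    obtain ⟨i, hi⟩ := hbne
    have hcoe_ne : ((r b i : ℂ)) ≠ 0 := fun h => hi (Subtype.coe_injective h)
    have hx : ((elemCoeff c Z₁ Z₂ : ℂˣ) : ℂ) = ((r a i : ℂ)) / ((r b i : ℂ)) := by
      rw [eq_div_iff hcoe_ne]
      linear_combination -(hpair i)
    rw [hx]
    exact L.div_mem (r a i).2 (r b i).2

end Part2
/-- If `ℚ(μ) ⊆ L ⊆ ℂ` then the set `J` of elementary identities spans the
ideal `T(L)` of graded identities over `L`; conversely if `L` is a field of definition for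
`T(ℂ)` (i.e. `T(ℂ) = T(L) ⊗_L ℂ`, every graded identity being a `ℂ`-linear combination of
identities with coefficients in `L`), then `L ⊇ ℚ(μ)`.  Thus `ℚ(μ)` is the unique minimal
field of definition of the graded identities. -/
theorem field_of_definition
    {G : Type*} [Group G] [Fintype G] (c : G → G → ℂˣ) (hc : IsNondeg c)
    {n : ℕ} (u : G → Matrix (Fin n) (Fin n) ℂ) (hu : IsTwistedBasis ℂ c u)
    (L : Subfield ℂ) :
    ((∀ x ∈ muSet c, (x : ℂ) ∈ L) →
        TIdealS L u ⊆ (Submodule.span ↥L (elemSet c) : Submodule ↥L (FreeAlg ℂ G))) ∧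
      (({p : FreeAlg ℂ G | IsGradedIdentity u p} ⊆
            (Submodule.span ℂ (TIdealS L u) : Submodule ℂ (FreeAlg ℂ G))) →
        ∀ x ∈ muSet c, (x : ℂ) ∈ L) := by
  constructor
  · intro _
    exact part1 hc.1 hu L
  · intro hsp
    exact part2 hc.1 hu L hsp

end Paper
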